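/- Lie derivative of the transversality matrix on an invariant torus (identity (eq:LieB) in the invariant case): in the geometric and frame setting, suppose Z_h(K(θ,φ),φ) = −ℒ_{ω,α}K(θ,φ) for all (θ,φ) ∈ 𝕋^n × 𝕋^ℓ. Then the matrix B(θ,φ) = (L^⊤ G(K) L)^{-1} satisfies ℒ_{ω,α}B(θ,φ) = Ñ(θ,φ)^⊤ J(K(θ,φ))^{-⊤} T_h(K(θ,φ),φ) Ñ(θ,φ), where Ñ = J(K) L B and T_h(z,φ) = Ω(z)( D_z Z_h(z,φ) − D_zJ(z)[Z_h(z,φ)] J(z)^{-1} − J(z) D_z Z_h(z,φ) J(z)^{-1} ). -/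

import Mathlib

open scoped BigOperators
open Matrix MeasureTheory

noncomputable section

/-- Points of `ℝⁿ × ℝˡ` (the universal cover of the torus `𝕋ⁿ × 𝕋ˡ`). -/
abbrev PtR (n ℓ : ℕ) := (Fin n → ℝ) × (Fin ℓ → ℝ)

/-- `ℤ^{n+ℓ}`-periodicity. -/
def PerR {n ℓ : ℕ} {E : Type*} (f : PtR n ℓ → E) : Prop :=
  ∀ (θ : Fin n → ℝ) (φ : Fin ℓ → ℝ) (k : Fin n → ℤ) (m : Fin ℓ → ℤ),
    f (θ + fun i => (k i : ℝ), φ + fun j => (m j : ℝ)) = f (θ, φ)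

/-- The Lie derivative `ℒ_{ω,α} f = -(Σ ωᵢ ∂f/∂θᵢ + Σ αⱼ ∂f/∂φⱼ)`. -/
def lieR {n ℓ : ℕ} {E : Type*} [NormedAddCommGroup E] [NormedSpace ℝ E]
    (ω : Fin n → ℝ) (α : Fin ℓ → ℝ) (f : PtR n ℓ → E) (x : PtR n ℓ) : E :=
  -((∑ i, ω i • fderiv ℝ f x (Pi.single i 1, 0)) +
    ∑ j, α j • fderiv ℝ f x (0, Pi.single j 1))

/-- Entrywise Lie derivative of a matrix-valued map. -/
def lieRM {n ℓ : ℕ} {I J : Type*} (ω : Fin n → ℝ) (α : Fin ℓ → ℝ)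
    (M : PtR n ℓ → Matrix I J ℝ) (x : PtR n ℓ) : Matrix I J ℝ :=
  Matrix.of fun i j => lieR ω α (fun w => M w i j) x

/-- Jacobian matrix of a self-map of `ℝᵐ`. -/
def rJac {m : ℕ} (a : (Fin m → ℝ) → (Fin m → ℝ)) (z : Fin m → ℝ) :
    Matrix (Fin m) (Fin m) ℝ :=
  Matrix.of fun i j => fderiv ℝ a z (Pi.single j 1) i

/-- Exact symplectic matrix `Ω(z) = (Da(z))ᵀ - Da(z)`. -/
def OmegaR {m : ℕ} (a : (Fin m → ℝ) → (Fin m → ℝ)) (z : Fin m → ℝ) :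
    Matrix (Fin m) (Fin m) ℝ :=
  (rJac a z)ᵀ - rJac a z

/-- Directional derivative `D_zM(z)[v]` of a matrix-valued map. -/
def matDirR {m p q : ℕ} (M : (Fin m → ℝ) → Matrix (Fin p) (Fin q) ℝ)
    (z v : Fin m → ℝ) : Matrix (Fin p) (Fin q) ℝ :=
  Matrix.of fun i j => fderiv ℝ (fun w => M w i j) z v

/-- The gradient `(D_z h)ᵀ` of the Hamiltonian in the phase-space variables. -/
def gradR {m ℓ : ℕ} (h : (Fin m → ℝ) × (Fin ℓ → ℝ) → ℝ) (z : Fin m → ℝ)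
    (φ : Fin ℓ → ℝ) : Fin m → ℝ :=
  fun i => fderiv ℝ (fun w => h (w, φ)) z (Pi.single i 1)

/-- The Hamiltonian vector field `Z_h(z,φ) = Ω(z)⁻¹ (D_z h(z,φ))ᵀ`. -/
def ZhR {m ℓ : ℕ} (a : (Fin m → ℝ) → (Fin m → ℝ))
    (h : (Fin m → ℝ) × (Fin ℓ → ℝ) → ℝ) (z : Fin m → ℝ) (φ : Fin ℓ → ℝ) :
    Fin m → ℝ :=
  (OmegaR a z)⁻¹.mulVec (gradR h z φ)

/-- The Jacobian `D_z Z_h`. -/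
def DzZhR {m ℓ : ℕ} (a : (Fin m → ℝ) → (Fin m → ℝ))
    (h : (Fin m → ℝ) × (Fin ℓ → ℝ) → ℝ) (z : Fin m → ℝ) (φ : Fin ℓ → ℝ) :
    Matrix (Fin m) (Fin m) ℝ :=
  Matrix.of fun i j => fderiv ℝ (fun w => ZhR a h w φ i) z (Pi.single j 1)

/-- `D_θ K` as a matrix-valued map. -/
def DθR {n ℓ m : ℕ} (K : PtR n ℓ → (Fin m → ℝ)) (x : PtR n ℓ) :
    Matrix (Fin m) (Fin n) ℝ :=
  Matrix.of fun p i => fderiv ℝ K x (Pi.single i 1, 0) p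

/-- `D_φ K` as a matrix-valued map. -/
def DφR {n ℓ m : ℕ} (K : PtR n ℓ → (Fin m → ℝ)) (x : PtR n ℓ) :
    Matrix (Fin m) (Fin ℓ) ℝ :=
  Matrix.of fun p j => fderiv ℝ K x (0, Pi.single j 1) p

/-- `J = -Ω⁻¹G`. -/
def JR {m : ℕ} (a : (Fin m → ℝ) → (Fin m → ℝ))
    (G : (Fin m → ℝ) → Matrix (Fin m) (Fin m) ℝ) (z : Fin m → ℝ) :
    Matrix (Fin m) (Fin m) ℝ :=
  -((OmegaR a z)⁻¹ * G z)

/-- `T_h(z,φ) = Ω(z)(D_zZ_h - D_zJ[Z_h]·J⁻¹ - J·D_zZ_h·J⁻¹)`. -/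
def ThR {m ℓ : ℕ} (a : (Fin m → ℝ) → (Fin m → ℝ))
    (G : (Fin m → ℝ) → Matrix (Fin m) (Fin m) ℝ)
    (h : (Fin m → ℝ) × (Fin ℓ → ℝ) → ℝ) (z : Fin m → ℝ) (φ : Fin ℓ → ℝ) :
    Matrix (Fin m) (Fin m) ℝ :=
  OmegaR a z *
    (DzZhR a h z φ - matDirR (JR a G) z (ZhR a h z φ) * (JR a G z)⁻¹
      - JR a G z * DzZhR a h z φ * (JR a G z)⁻¹)


namespace LieBAux

variable {E : Type*} [NormedAddCommGroup E] [NormedSpace ℝ E]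

/-- Directional derivative of a matrix-valued map, entrywise. -/
def mdd {p q : ℕ} (M : E → Matrix (Fin p) (Fin q) ℝ) (x v : E) : Matrix (Fin p) (Fin q) ℝ :=
  Matrix.of fun i j => fderiv ℝ (fun w => M w i j) x v

/-- All entries differentiable at `x`. -/
def MDiffAt {p q : ℕ} (M : E → Matrix (Fin p) (Fin q) ℝ) (x : E) : Prop :=
  ∀ i j, DifferentiableAt ℝ (fun w => M w i j) x

lemma fderiv_sum_mul {ι : Type*} [Fintype ι] (f g : ι → E → ℝ) (x v : E)
    (hf : ∀ k, DifferentiableAt ℝ (f k) x) (hg : ∀ k, DifferentiableAt ℝ (g k) x) :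
    fderiv ℝ (fun w => ∑ k, f k w * g k w) x v
      = ∑ k, (fderiv ℝ (f k) x v * g k x + f k x * fderiv ℝ (g k) x v) := by
  have h : HasFDerivAt (fun w => ∑ k, f k w * g k w)
      (∑ k, (f k x • fderiv ℝ (g k) x + g k x • fderiv ℝ (f k) x)) x := by
    apply HasFDerivAt.fun_sum
    intro k _
    exact ((hf k).hasFDerivAt.mul (hg k).hasFDerivAt)
  rw [h.fderiv]
  simp only [ContinuousLinearMap.sum_apply, ContinuousLinearMap.add_apply,
    ContinuousLinearMap.smul_apply, smul_eq_mul]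
  exact Finset.sum_congr rfl fun k _ => by ring

lemma mdd_mul {p q r : ℕ} (M : E → Matrix (Fin p) (Fin q) ℝ) (N : E → Matrix (Fin q) (Fin r) ℝ)
    (x v : E) (hM : MDiffAt M x) (hN : MDiffAt N x) :
    mdd (fun w => M w * N w) x v = mdd M x v * N x + M x * mdd N x v := by
  ext i j
  show fderiv ℝ (fun w => (M w * N w) i j) x v = _
  have : (fun w => (M w * N w) i j) = fun w => ∑ k, M w i k * N w k j := by
    funext w; simp [Matrix.mul_apply]
  rw [this, fderiv_sum_mul _ _ x v (fun k => hM i k) (fun k => hN k j)]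
  simp [Matrix.add_apply, Matrix.mul_apply, mdd, Finset.sum_add_distrib]

lemma MDiffAt.mul {p q r : ℕ} {M : E → Matrix (Fin p) (Fin q) ℝ} {N : E → Matrix (Fin q) (Fin r) ℝ}
    {x : E} (hM : MDiffAt M x) (hN : MDiffAt N x) : MDiffAt (fun w => M w * N w) x := by
  intro i j
  have : (fun w => (M w * N w) i j) = fun w => ∑ k, M w i k * N w k j := by
    funext w; simp [Matrix.mul_apply]
  rw [this]
  exact DifferentiableAt.fun_sum fun k _ => (hM i k).mul (hN k j)

lemma MDiffAt.det {q : ℕ} {M : E → Matrix (Fin q) (Fin q) ℝ} {x : E} (hM : MDiffAt M x) :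
    DifferentiableAt ℝ (fun w => (M w).det) x := by
  have : (fun w => (M w).det)
      = fun w => ∑ σ : Equiv.Perm (Fin q), ((Equiv.Perm.sign σ : ℤ) : ℝ) * ∏ i, M w (σ i) i := by
    funext w; rw [Matrix.det_apply']
  rw [this]
  apply DifferentiableAt.fun_sum
  intro σ _
  apply DifferentiableAt.const_mul
  have h : HasFDerivAt (fun w => ∏ i, M w (σ i) i)
      (∑ i : Fin q, (∏ j ∈ Finset.univ.erase i, M x (σ j) j) •
        fderiv ℝ (fun w => M w (σ i) i) x) x :=
    HasFDerivAt.finset_prod fun i _ => (hM (σ i) i).hasFDerivAt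
  exact h.differentiableAt

lemma MDiffAt.adjugate {q : ℕ} {M : E → Matrix (Fin q) (Fin q) ℝ} {x : E} (hM : MDiffAt M x) :
    MDiffAt (fun w => (M w).adjugate) x := by
  intro i j
  have : (fun w => (M w).adjugate i j)
      = fun w => ((M w).updateRow j (Pi.single i 1)).det := by
    funext w; rw [Matrix.adjugate_apply]
  rw [this]
  apply MDiffAt.det
  intro k l
  by_cases hk : k = j
  · subst hk
    simp only [Matrix.updateRow_apply, if_pos rfl]
    exact differentiableAt_const _
  · simp only [Matrix.updateRow_apply, if_neg hk]
    exact hM k l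

lemma MDiffAt.inv {q : ℕ} {M : E → Matrix (Fin q) (Fin q) ℝ} {x : E} (hM : MDiffAt M x)
    (hdet : (M x).det ≠ 0) : MDiffAt (fun w => (M w)⁻¹) x := by
  intro i j
  have : (fun w => (M w)⁻¹ i j) = fun w => ((M w).det)⁻¹ * (M w).adjugate i j := by
    funext w
    rw [Matrix.inv_def, Ring.inverse_eq_inv']
    simp [Matrix.smul_apply]
  rw [this]
  exact (hM.det.inv hdet).mul (hM.adjugate i j)

lemma MDiffAt.continuousAt_det {q : ℕ} {M : E → Matrix (Fin q) (Fin q) ℝ} {x : E}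
    (hM : MDiffAt M x) : ContinuousAt (fun w => (M w).det) x :=
  hM.det.continuousAt

lemma mdd_inv {q : ℕ} {M : E → Matrix (Fin q) (Fin q) ℝ} {x : E}
    (hM : ∀ᶠ w in nhds x, MDiffAt M w) (hdet : (M x).det ≠ 0) (v : E) :
    mdd (fun w => (M w)⁻¹) x v = -((M x)⁻¹ * mdd M x v * (M x)⁻¹) := by
  have hMx : MDiffAt M x := hM.self_of_nhds
  have hinvd : MDiffAt (fun w => (M w)⁻¹) x := hMx.inv hdet
  have hdetev : ∀ᶠ w in nhds x, (M w).det ≠ 0 := by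
    have hc : ContinuousAt (fun w => (M w).det) x := hMx.continuousAt_det
    exact hc.eventually_ne hdet
  -- eventually M w * (M w)⁻¹ = 1
  have hev : ∀ᶠ w in nhds x, M w * (M w)⁻¹ = 1 := by
    filter_upwards [hdetev] with w hw
    exact Matrix.mul_nonsing_inv _ (isUnit_iff_ne_zero.mpr hw)
  have hzero : mdd (fun w => M w * (M w)⁻¹) x v = 0 := by
    ext i j
    show fderiv ℝ (fun w => (M w * (M w)⁻¹) i j) x v = (0 : Matrix (Fin q) (Fin q) ℝ) i j
    have : (fun w => (M w * (M w)⁻¹) i j) =ᶠ[nhds x] fun _ => (1 : Matrix (Fin q) (Fin q) ℝ) i j := by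
      filter_upwards [hev] with w hw
      rw [hw]
    rw [this.fderiv_eq, fderiv_fun_const]
    simp
  have hprod := mdd_mul M (fun w => (M w)⁻¹) x v hMx hinvd
  rw [hzero] at hprod
  have hiu : IsUnit (M x).det := isUnit_iff_ne_zero.mpr hdet
  -- 0 = mdd M * M⁻¹ + M * mdd M⁻¹
  have h2 : M x * mdd (fun w => (M w)⁻¹) x v = -(mdd M x v * (M x)⁻¹) := by
    have := hprod.symm
    exact eq_neg_of_add_eq_zero_right this
  calc mdd (fun w => (M w)⁻¹) x v
      = (M x)⁻¹ * (M x * mdd (fun w => (M w)⁻¹) x v) := by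
        rw [← Matrix.mul_assoc, Matrix.nonsing_inv_mul _ hiu, Matrix.one_mul]
    _ = -((M x)⁻¹ * mdd M x v * (M x)⁻¹) := by
        rw [h2, Matrix.mul_neg, Matrix.mul_assoc]

lemma fderiv_swap {F : Type*} [NormedAddCommGroup F] [NormedSpace ℝ F]
    {f : E → F} {x : E} (hf : ContDiffAt ℝ 2 f x) (u v : E) :
    fderiv ℝ (fun w => fderiv ℝ f w u) x v = fderiv ℝ (fun w => fderiv ℝ f w v) x u := by
  have hsymm : IsSymmSndFDerivAt ℝ f x := hf.isSymmSndFDerivAt (le_of_eq minSmoothness_of_isRCLikeNormedField)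
  have hd : DifferentiableAt ℝ (fderiv ℝ f) x :=
    (hf.fderiv_right (m := 1) (le_refl 2)).differentiableAt one_ne_zero
  have key : ∀ u v : E, fderiv ℝ (fun w => fderiv ℝ f w u) x v
      = fderiv ℝ (fderiv ℝ f) x v u := by
    intro u v
    have : (fun w => fderiv ℝ f w u)
        = fun w => (ContinuousLinearMap.apply ℝ F u) (fderiv ℝ f w) := rfl
    rw [this]
    have hc := fderiv_comp (𝕜 := ℝ) x ((ContinuousLinearMap.apply ℝ F u).differentiableAt) hd
    rw [show (fun w => (ContinuousLinearMap.apply ℝ F u) (fderiv ℝ f w)) = (ContinuousLinearMap.apply ℝ F u) ∘ fderiv ℝ f from rfl, hc]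
    simp
  rw [key u v, key v u]
  exact hsymm.eq v u
end LieBAux
namespace LieBAux
variable {E : Type*} [NormedAddCommGroup E] [NormedSpace ℝ E]

lemma mdd_neg {p q : ℕ} (M : E → Matrix (Fin p) (Fin q) ℝ) (x v : E) :
    mdd (fun w => -(M w)) x v = -(mdd M x v) := by
  ext i j
  show fderiv ℝ (fun w => (-(M w)) i j) x v = -(fderiv ℝ (fun w => M w i j) x v)
  have e : (fun w => (-(M w)) i j) = fun w => -(M w i j) := rfl
  rw [e, fderiv_fun_neg]
  rfl

lemma core_algebra {R : Type*} [Ring R] (Ω Ωi Gm J Ji A S Ms Mt DΩ DG DJ At : R)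
    (hΩ1 : Ω * Ωi = 1)
    (hJ1 : Ji * J = 1)
    (hJdef : J = -(Ωi * Gm))
    (hΩA : Ω * A = S - Ms)
    (hR6 : Ms = Mt + DΩ)
    (hDJ : DJ = -(-(Ωi * DΩ * Ωi) * Gm + Ωi * DG))
    (hAt : At * Gm = (S - Mt) * J) :
    Ω * (A - DJ * Ji - J * A * Ji) * J = At * Gm + DG + Gm * A := by
  have hΩJ : Ω * J = -Gm := by
    rw [hJdef]
    calc Ω * -(Ωi * Gm) = -((Ω * Ωi) * Gm) := by noncomm_ring
      _ = -Gm := by rw [hΩ1, one_mul]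
  have hΩDJ : Ω * DJ = -(DΩ * J + DG) := by
    rw [hDJ, hJdef]
    have h2 : Ω * (Ωi * DΩ * Ωi * Gm) = DΩ * (Ωi * Gm) := by
      calc Ω * (Ωi * DΩ * Ωi * Gm) = (Ω * Ωi) * (DΩ * (Ωi * Gm)) := by noncomm_ring
        _ = _ := by rw [hΩ1, one_mul]
    calc Ω * -(-(Ωi * DΩ * Ωi) * Gm + Ωi * DG)
        = Ω * (Ωi * DΩ * Ωi * Gm) - (Ω * Ωi) * DG := by noncomm_ring
      _ = DΩ * (Ωi * Gm) - 1 * DG := by rw [h2, hΩ1]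
      _ = -(DΩ * -(Ωi * Gm) + DG) := by noncomm_ring
  calc Ω * (A - DJ * Ji - J * A * Ji) * J
      = (Ω * A) * J - (Ω * DJ) * (Ji * J) - (Ω * J) * A * (Ji * J) := by noncomm_ring
    _ = (S - Ms) * J - -(DΩ * J + DG) * 1 - (-Gm) * A * 1 := by rw [hΩA, hΩDJ, hΩJ, hJ1]
    _ = (S - Ms + DΩ) * J + DG + Gm * A := by noncomm_ring
    _ = (S - Mt) * J + DG + Gm * A := by rw [hR6]; noncomm_ring
    _ = At * Gm + DG + Gm * A := by rw [hAt]

end LieBAux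
namespace LieBAux

section ZLevel

variable {m ℓ : ℕ} {U : Set (Fin m → ℝ)} {a : (Fin m → ℝ) → (Fin m → ℝ)}
  {h : (Fin m → ℝ) × (Fin ℓ → ℝ) → ℝ}

lemma rJac_entry_contDiffOn (hU : IsOpen U) (ha : ContDiffOn ℝ 2 a U) (i j : Fin m) :
    ContDiffOn ℝ 1 (fun z => rJac a z i j) U := by
  have h1 : ContDiffOn ℝ 1 (fderiv ℝ a) U := ha.fderiv_of_isOpen hU (le_refl 2)
  have h2 : ContDiff ℝ 1 (fun L : (Fin m → ℝ) →L[ℝ] (Fin m → ℝ) => L (Pi.single j 1) i) :=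
    by have := ((ContinuousLinearMap.proj (R := ℝ) (φ := fun _ : Fin m => ℝ) i).comp
      (ContinuousLinearMap.apply ℝ (Fin m → ℝ) (Pi.single j 1 : Fin m → ℝ))).contDiff (n := 1); exact this
  exact h2.comp_contDiffOn h1

lemma omega_entry_contDiffOn (hU : IsOpen U) (ha : ContDiffOn ℝ 2 a U) (i j : Fin m) :
    ContDiffOn ℝ 1 (fun z => OmegaR a z i j) U := by
  have e : (fun z => OmegaR a z i j) = fun z => rJac a z j i - rJac a z i j := by
    funext z; simp [OmegaR, Matrix.sub_apply, Matrix.transpose_apply]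
  rw [e]
  exact (rJac_entry_contDiffOn hU ha j i).sub (rJac_entry_contDiffOn hU ha i j)

lemma omega_mdiffAt (hU : IsOpen U) (ha : ContDiffOn ℝ 2 a U) {z : Fin m → ℝ} (hz : z ∈ U) :
    MDiffAt (OmegaR a) z := fun i j =>
  ((omega_entry_contDiffOn hU ha i j).contDiffAt (hU.mem_nhds hz)).differentiableAt one_ne_zero

lemma omegaInv_mdiffAt (hU : IsOpen U) (ha : ContDiffOn ℝ 2 a U)
    (hΩ : ∀ z ∈ U, (OmegaR a z).det ≠ 0) {z : Fin m → ℝ} (hz : z ∈ U) :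
    MDiffAt (fun w => (OmegaR a w)⁻¹) z :=
  (omega_mdiffAt hU ha hz).inv (hΩ z hz)

end ZLevel
end LieBAux
namespace LieBAux
section ZLevel2

variable {m ℓ : ℕ} {U : Set (Fin m → ℝ)} {a : (Fin m → ℝ) → (Fin m → ℝ)}
  {h : (Fin m → ℝ) × (Fin ℓ → ℝ) → ℝ}

/-- On `U ×ˢ univ`, the partial gradient equals the full derivative applied to `(eᵢ, 0)`. -/
lemma grad_eq_full (hU : IsOpen U) (hh : ContDiffOn ℝ 2 h (U ×ˢ (Set.univ : Set (Fin ℓ → ℝ))))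
    {z : Fin m → ℝ} (hz : z ∈ U) (φ : Fin ℓ → ℝ) (i : Fin m) :
    gradR h z φ i = fderiv ℝ h (z, φ) (Pi.single i 1, 0) := by
  have hmem : (z, φ) ∈ U ×ˢ (Set.univ : Set (Fin ℓ → ℝ)) := ⟨hz, Set.mem_univ _⟩
  have hopen : IsOpen (U ×ˢ (Set.univ : Set (Fin ℓ → ℝ))) := hU.prod isOpen_univ
  have hdiff : DifferentiableAt ℝ h (z, φ) :=
    ((hh.contDiffAt (hopen.mem_nhds hmem)).differentiableAt (by norm_num))
  have hcomp : (fun w => h (w, φ)) = h ∘ (fun w => (w, φ)) := rfl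
  have := fderiv_comp (𝕜 := ℝ) z hdiff (hasFDerivAt_prodMk_left z φ).differentiableAt
  rw [gradR, hcomp, this]
  rw [(hasFDerivAt_prodMk_left z φ).fderiv]
  rfl

/-- Joint differentiability of the gradient entries on `U ×ˢ univ`. -/
lemma grad_joint_diff (hU : IsOpen U) (hh : ContDiffOn ℝ 2 h (U ×ˢ (Set.univ : Set (Fin ℓ → ℝ))))
    {z : Fin m → ℝ} (hz : z ∈ U) (φ : Fin ℓ → ℝ) (i : Fin m) :
    DifferentiableAt ℝ (fun p : (Fin m → ℝ) × (Fin ℓ → ℝ) => gradR h p.1 p.2 i) (z, φ) := by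
  have hopen : IsOpen (U ×ˢ (Set.univ : Set (Fin ℓ → ℝ))) := hU.prod isOpen_univ
  have hmem : (z, φ) ∈ U ×ˢ (Set.univ : Set (Fin ℓ → ℝ)) := ⟨hz, Set.mem_univ _⟩
  have h1 : ContDiffOn ℝ 1 (fderiv ℝ h) (U ×ˢ (Set.univ : Set (Fin ℓ → ℝ))) :=
    hh.fderiv_of_isOpen hopen (le_refl 2)
  have h2 : DifferentiableAt ℝ
      (fun p : (Fin m → ℝ) × (Fin ℓ → ℝ) => fderiv ℝ h p (Pi.single i 1, 0)) (z, φ) := by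
    have h3 : ContDiff ℝ 1 (fun L : ((Fin m → ℝ) × (Fin ℓ → ℝ)) →L[ℝ] ℝ =>
        L (Pi.single i 1, 0)) :=
      (ContinuousLinearMap.apply ℝ ℝ ((Pi.single i 1, 0) : (Fin m → ℝ) × (Fin ℓ → ℝ))).contDiff
    exact ((h3.comp_contDiffOn h1).contDiffAt (hopen.mem_nhds hmem)).differentiableAt one_ne_zero
  apply h2.congr_of_eventuallyEq
  filter_upwards [hopen.mem_nhds hmem] with p hp
  exact grad_eq_full hU hh hp.1 p.2 i

/-- Joint differentiability of the Hamiltonian vector field entries. -/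
lemma Zh_joint_diff (hU : IsOpen U) (ha : ContDiffOn ℝ 2 a U)
    (hΩ : ∀ z ∈ U, (OmegaR a z).det ≠ 0)
    (hh : ContDiffOn ℝ 2 h (U ×ˢ (Set.univ : Set (Fin ℓ → ℝ))))
    {z : Fin m → ℝ} (hz : z ∈ U) (φ : Fin ℓ → ℝ) (i : Fin m) :
    DifferentiableAt ℝ (fun p : (Fin m → ℝ) × (Fin ℓ → ℝ) => ZhR a h p.1 p.2 i) (z, φ) := by
  have e : (fun p : (Fin m → ℝ) × (Fin ℓ → ℝ) => ZhR a h p.1 p.2 i)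
      = fun p => ∑ k, (OmegaR a p.1)⁻¹ i k * gradR h p.1 p.2 k := by
    funext p; simp [ZhR, Matrix.mulVec, dotProduct]
  rw [e]
  apply DifferentiableAt.fun_sum
  intro k _
  have h1 : DifferentiableAt ℝ (fun p : (Fin m → ℝ) × (Fin ℓ → ℝ) => (OmegaR a p.1)⁻¹ i k)
      (z, φ) :=
    by have := (omegaInv_mdiffAt hU ha hΩ hz i k).comp (z, φ) (differentiableAt_fst (𝕜 := ℝ) (p := ((z, φ) : (Fin m → ℝ) × (Fin ℓ → ℝ)))); exact this
  exact h1.mul (grad_joint_diff hU hh hz φ k)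

/-- Partial (in `z`) differentiability of the Hamiltonian vector field entries. -/
lemma Zh_partial_diff (hU : IsOpen U) (ha : ContDiffOn ℝ 2 a U)
    (hΩ : ∀ z ∈ U, (OmegaR a z).det ≠ 0)
    (hh : ContDiffOn ℝ 2 h (U ×ˢ (Set.univ : Set (Fin ℓ → ℝ))))
    {z : Fin m → ℝ} (hz : z ∈ U) (φ : Fin ℓ → ℝ) (i : Fin m) :
    DifferentiableAt ℝ (fun w => ZhR a h w φ i) z := by
  have e : (fun w => ZhR a h w φ i)
      = (fun p : (Fin m → ℝ) × (Fin ℓ → ℝ) => ZhR a h p.1 p.2 i) ∘ (fun w => (w, φ)) := rfl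
  rw [e]
  exact (Zh_joint_diff hU ha hΩ hh hz φ i).comp z
    (hasFDerivAt_prodMk_left z φ).differentiableAt

/-- Partial `z`-derivative of `Zh` equals the joint derivative applied to `(u, 0)`. -/
lemma Zh_partial_eq_joint (hU : IsOpen U) (ha : ContDiffOn ℝ 2 a U)
    (hΩ : ∀ z ∈ U, (OmegaR a z).det ≠ 0)
    (hh : ContDiffOn ℝ 2 h (U ×ˢ (Set.univ : Set (Fin ℓ → ℝ))))
    {z : Fin m → ℝ} (hz : z ∈ U) (φ : Fin ℓ → ℝ) (i : Fin m) (u : Fin m → ℝ) :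
    fderiv ℝ (fun w => ZhR a h w φ i) z u
      = fderiv ℝ (fun p : (Fin m → ℝ) × (Fin ℓ → ℝ) => ZhR a h p.1 p.2 i) (z, φ) (u, 0) := by
  have e : (fun w => ZhR a h w φ i)
      = (fun p : (Fin m → ℝ) × (Fin ℓ → ℝ) => ZhR a h p.1 p.2 i) ∘ (fun w => (w, φ)) := rfl
  rw [e, fderiv_comp z (Zh_joint_diff hU ha hΩ hh hz φ i)
    (hasFDerivAt_prodMk_left z φ).differentiableAt]
  rw [(hasFDerivAt_prodMk_left z φ).fderiv]
  rfl

end ZLevel2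
end LieBAux
namespace LieBAux
section ZLevel3

variable {m ℓ : ℕ} {U : Set (Fin m → ℝ)} {a : (Fin m → ℝ) → (Fin m → ℝ)}
  {h : (Fin m → ℝ) × (Fin ℓ → ℝ) → ℝ}

lemma fderiv_apply_sum {f : (Fin m → ℝ) → ℝ} (z Z : Fin m → ℝ) :
    fderiv ℝ f z Z = ∑ k, Z k * fderiv ℝ f z (Pi.single k 1) := by
  have hZ : Z = ∑ k, Z k • (Pi.single k 1 : Fin m → ℝ) := by
    have : ∀ k, Z k • (Pi.single k 1 : Fin m → ℝ) = Pi.single k (Z k) := by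
      intro k; rw [← Pi.single_smul, smul_eq_mul, mul_one]
    simp_rw [this, Finset.univ_sum_single]
  conv_lhs => rw [hZ]
  rw [map_sum]
  simp

lemma hpart_contDiffOn (hU : IsOpen U)
    (hh : ContDiffOn ℝ 2 h (U ×ˢ (Set.univ : Set (Fin ℓ → ℝ)))) (φ : Fin ℓ → ℝ) :
    ContDiffOn ℝ 2 (fun w => h (w, φ)) U := by
  have hincl : ContDiff ℝ 2 (fun w : Fin m → ℝ => (w, φ)) := contDiff_id.prodMk contDiff_const
  exact hh.comp hincl.contDiffOn (fun w hw => ⟨hw, Set.mem_univ _⟩)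

lemma grad_partial_contDiffOn (hU : IsOpen U)
    (hh : ContDiffOn ℝ 2 h (U ×ˢ (Set.univ : Set (Fin ℓ → ℝ)))) (φ : Fin ℓ → ℝ) (i : Fin m) :
    ContDiffOn ℝ 1 (fun z => gradR h z φ i) U := by
  have h1 : ContDiffOn ℝ 1 (fderiv ℝ (fun w => h (w, φ))) U :=
    (hpart_contDiffOn hU hh φ).fderiv_of_isOpen hU (le_refl 2)
  have h2 : ContDiff ℝ 1 (fun L : (Fin m → ℝ) →L[ℝ] ℝ => L (Pi.single i 1)) :=
    (ContinuousLinearMap.apply ℝ ℝ ((Pi.single i 1 : Fin m → ℝ))).contDiff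
  exact h2.comp_contDiffOn h1

lemma grad_partial_diff (hU : IsOpen U)
    (hh : ContDiffOn ℝ 2 h (U ×ˢ (Set.univ : Set (Fin ℓ → ℝ)))) (φ : Fin ℓ → ℝ)
    {z : Fin m → ℝ} (hz : z ∈ U) (i : Fin m) :
    DifferentiableAt ℝ (fun z' => gradR h z' φ i) z :=
  ((grad_partial_contDiffOn hU hh φ i).contDiffAt (hU.mem_nhds hz)).differentiableAt one_ne_zero

/-- Symmetry of the Hessian of `h(·, φ)`. -/
lemma hess_symm (hU : IsOpen U)
    (hh : ContDiffOn ℝ 2 h (U ×ˢ (Set.univ : Set (Fin ℓ → ℝ)))) (φ : Fin ℓ → ℝ)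
    {z : Fin m → ℝ} (hz : z ∈ U) (i j : Fin m) :
    fderiv ℝ (fun z' => gradR h z' φ i) z (Pi.single j 1)
      = fderiv ℝ (fun z' => gradR h z' φ j) z (Pi.single i 1) := by
  have hf : ContDiffAt ℝ 2 (fun w => h (w, φ)) z :=
    (hpart_contDiffOn hU hh φ).contDiffAt (hU.mem_nhds hz)
  exact fderiv_swap hf (Pi.single i 1) (Pi.single j 1)

/-- Differentiating the identity `Ω Z_h = ∇h` in `z`: `S = M + Ω A`. -/
lemma hess_eq (hU : IsOpen U) (ha : ContDiffOn ℝ 2 a U)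
    (hΩ : ∀ z ∈ U, (OmegaR a z).det ≠ 0)
    (hh : ContDiffOn ℝ 2 h (U ×ˢ (Set.univ : Set (Fin ℓ → ℝ))))
    {z : Fin m → ℝ} (hz : z ∈ U) (φ : Fin ℓ → ℝ) :
    (Matrix.of fun i j => fderiv ℝ (fun z' => gradR h z' φ i) z (Pi.single j 1))
      = (Matrix.of fun i j =>
          ∑ k, fderiv ℝ (fun z' => OmegaR a z' i k) z (Pi.single j 1) * ZhR a h z φ k)
        + OmegaR a z * DzZhR a h z φ := by
  ext i j
  have hid : ∀ z' ∈ U, gradR h z' φ i = ∑ k, OmegaR a z' i k * ZhR a h z' φ k := by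
    intro z' hz'
    have hiu : IsUnit (OmegaR a z').det := isUnit_iff_ne_zero.mpr (hΩ z' hz')
    have : (OmegaR a z').mulVec (ZhR a h z' φ) = gradR h z' φ := by
      rw [ZhR, Matrix.mulVec_mulVec, Matrix.mul_nonsing_inv _ hiu, Matrix.one_mulVec]
    rw [← this]
    simp [Matrix.mulVec, dotProduct]
  have hev : (fun z' => gradR h z' φ i)
      =ᶠ[nhds z] fun z' => ∑ k, OmegaR a z' i k * ZhR a h z' φ k := by
    filter_upwards [hU.mem_nhds hz] with z' hz'
    exact hid z' hz'
  show fderiv ℝ (fun z' => gradR h z' φ i) z (Pi.single j 1) = _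
  rw [hev.fderiv_eq]
  rw [fderiv_sum_mul _ _ z (Pi.single j 1)
    (fun k => (omega_mdiffAt hU ha hz) i k)
    (fun k => Zh_partial_diff hU ha hΩ hh hz φ k)]
  simp [Matrix.add_apply, Matrix.mul_apply, Finset.sum_add_distrib, DzZhR]

/-- second-derivative symmetry for the exact form `a`, entrywise cyclic identity. -/
lemma omega_deriv_cyclic (hU : IsOpen U) (ha : ContDiffOn ℝ 2 a U)
    {z : Fin m → ℝ} (hz : z ∈ U) (i j k : Fin m) :
    fderiv ℝ (fun z' => OmegaR a z' i k) z (Pi.single j 1)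
      = fderiv ℝ (fun z' => OmegaR a z' j k) z (Pi.single i 1)
        + fderiv ℝ (fun z' => OmegaR a z' i j) z (Pi.single k 1) := by
  have hca : ContDiffAt ℝ 2 a z := ha.contDiffAt (hU.mem_nhds hz)
  have hda : ∀ u : Fin m → ℝ, DifferentiableAt ℝ (fun z' => fderiv ℝ a z' u) z := by
    intro u
    have h1 : ContDiffAt ℝ 1 (fderiv ℝ a) z := hca.fderiv_right (le_refl 2)
    exact ((ContinuousLinearMap.apply ℝ (Fin m → ℝ) u).differentiableAt.comp z
      (h1.differentiableAt one_ne_zero))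
  -- scalar second derivatives
  set c : (Fin m → ℝ) → (Fin m → ℝ) → Fin m → ℝ :=
    fun u v r => fderiv ℝ (fun z' => fderiv ℝ a z' u) z v r with hc
  have hcomp : ∀ (u v : Fin m → ℝ) (r : Fin m),
      fderiv ℝ (fun z' => fderiv ℝ a z' u r) z v = c u v r := by
    intro u v r
    have hF : HasFDerivAt (fun z' => fderiv ℝ a z' u r)
        ((ContinuousLinearMap.proj (R := ℝ) (φ := fun _ : Fin m => ℝ) r).comp
          (fderiv ℝ (fun z' => fderiv ℝ a z' u) z)) z :=
      HasFDerivAt.comp z (ContinuousLinearMap.hasFDerivAt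
        (ContinuousLinearMap.proj (R := ℝ) (φ := fun _ : Fin m => ℝ) r)) (hda u).hasFDerivAt
    rw [hF.fderiv]
    rfl
  have hsym : ∀ u v : Fin m → ℝ, c u v = c v u := by
    intro u v
    funext r
    rw [hc]
    simp only
    rw [fderiv_swap hca u v]
  -- Ω entries in terms of a
  have hΩe : ∀ (p q : Fin m), (fun z' => OmegaR a z' p q)
      = fun z' => fderiv ℝ a z' (Pi.single p 1) q - fderiv ℝ a z' (Pi.single q 1) p := by
    intro p q; funext z'
    simp [OmegaR, rJac, Matrix.sub_apply, Matrix.transpose_apply]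
  have hde : ∀ (u : Fin m → ℝ) (r : Fin m),
      DifferentiableAt ℝ (fun z' => fderiv ℝ a z' u r) z := by
    intro u r
    exact ((ContinuousLinearMap.proj (R := ℝ) (φ := fun _ : Fin m => ℝ) r
      ).differentiableAt.comp z (hda u))
  have expand : ∀ (p q : Fin m) (v : Fin m → ℝ),
      fderiv ℝ (fun z' => OmegaR a z' p q) z v
        = c (Pi.single p 1) v q - c (Pi.single q 1) v p := by
    intro p q v
    rw [hΩe p q, fderiv_fun_sub (hde _ _) (hde _ _)]
    simp only [ContinuousLinearMap.sub_apply]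
    rw [hcomp, hcomp]
  rw [expand, expand, expand]
  have h1 := hsym (Pi.single i 1) (Pi.single j 1)
  have h2 := hsym (Pi.single k 1) (Pi.single i 1)
  have h3 := hsym (Pi.single j 1) (Pi.single k 1)
  have e1 := congrFun h1 k
  have e2 := congrFun h2 j
  have e3 := congrFun h3 i
  linarith [e1, e2, e3]

end ZLevel3
end LieBAux
namespace LieBAux
section ZLevel4

variable {m ℓ : ℕ} {U : Set (Fin m → ℝ)} {a : (Fin m → ℝ) → (Fin m → ℝ)}
  {h : (Fin m → ℝ) × (Fin ℓ → ℝ) → ℝ}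

lemma matDirR_eq_mdd {p q : ℕ} (M : (Fin m → ℝ) → Matrix (Fin p) (Fin q) ℝ) (z v : Fin m → ℝ) :
    matDirR M z v = mdd M z v := rfl

/-- The core geometric identity: `T_h J = Aᵀ G + D_zG[Z] + G A`. -/
lemma core_identity (hU : IsOpen U) (ha : ContDiffOn ℝ 2 a U)
    (hΩ : ∀ z ∈ U, (OmegaR a z).det ≠ 0)
    (G : (Fin m → ℝ) → Matrix (Fin m) (Fin m) ℝ)
    (hG : ∀ i j, ContDiffOn ℝ 1 (fun z => G z i j) U)
    (hGsymm : ∀ z ∈ U, (G z)ᵀ = G z)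
    (hJinv : ∀ z ∈ U, (JR a G z).det ≠ 0)
    (hh : ContDiffOn ℝ 2 h (U ×ˢ (Set.univ : Set (Fin ℓ → ℝ))))
    {z : Fin m → ℝ} (hz : z ∈ U) (φ : Fin ℓ → ℝ) :
    ThR a G h z φ * JR a G z
      = (DzZhR a h z φ)ᵀ * G z + matDirR G z (ZhR a h z φ) + G z * DzZhR a h z φ := by
  have hiu : IsUnit (OmegaR a z).det := isUnit_iff_ne_zero.mpr (hΩ z hz)
  have hiuJ : IsUnit (JR a G z).det := isUnit_iff_ne_zero.mpr (hJinv z hz)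
  have hΩ1 : OmegaR a z * (OmegaR a z)⁻¹ = 1 := Matrix.mul_nonsing_inv _ hiu
  have hΩ2 : (OmegaR a z)⁻¹ * OmegaR a z = 1 := Matrix.nonsing_inv_mul _ hiu
  have hJ1 : (JR a G z)⁻¹ * JR a G z = 1 := Matrix.nonsing_inv_mul _ hiuJ
  have hJdef : JR a G z = -((OmegaR a z)⁻¹ * G z) := rfl
  -- S and M matrices
  set S := (Matrix.of fun i j => fderiv ℝ (fun z' => gradR h z' φ i) z (Pi.single j 1))
    with hSdef
  set Ms := (Matrix.of fun i j =>
    ∑ k, fderiv ℝ (fun z' => OmegaR a z' i k) z (Pi.single j 1) * ZhR a h z φ k) with hMsdef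
  have hR5 : S = Ms + OmegaR a z * DzZhR a h z φ := hess_eq hU ha hΩ hh hz φ
  have hR6 : Ms = Msᵀ + matDirR (OmegaR a) z (ZhR a h z φ) := by
    ext i j
    show (∑ k, fderiv ℝ (fun z' => OmegaR a z' i k) z (Pi.single j 1) * ZhR a h z φ k)
      = (∑ k, fderiv ℝ (fun z' => OmegaR a z' j k) z (Pi.single i 1) * ZhR a h z φ k)
        + fderiv ℝ (fun z' => OmegaR a z' i j) z (ZhR a h z φ)
    rw [fderiv_apply_sum, ← Finset.sum_add_distrib]
    apply Finset.sum_congr rfl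
    intro k _
    rw [omega_deriv_cyclic hU ha hz i j k]
    ring
  have hSs : Sᵀ = S := by
    ext i j
    show S j i = S i j
    exact hess_symm hU hh φ hz j i
  -- transposes and inverses of Ω
  have hΩT : (OmegaR a z)ᵀ = -OmegaR a z := by
    show ((rJac a z)ᵀ - rJac a z)ᵀ = -((rJac a z)ᵀ - rJac a z)
    rw [Matrix.transpose_sub, Matrix.transpose_transpose, neg_sub]
  have hnΩ : (-OmegaR a z)⁻¹ = -(OmegaR a z)⁻¹ := by
    apply Matrix.inv_eq_right_inv
    rw [Matrix.neg_mul, Matrix.mul_neg, neg_neg, hΩ1]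
  have hinvT : ((OmegaR a z)⁻¹)ᵀ = -(OmegaR a z)⁻¹ := by
    rw [Matrix.transpose_nonsing_inv, hΩT, hnΩ]
  -- Aᵀ G = (S - Msᵀ) J
  have hΩA : OmegaR a z * DzZhR a h z φ = S - Ms := by rw [hR5]; abel
  have hA : DzZhR a h z φ = (OmegaR a z)⁻¹ * (S - Ms) := by
    rw [← hΩA, ← Matrix.mul_assoc, hΩ2, Matrix.one_mul]
  have hAt : (DzZhR a h z φ)ᵀ * G z = (S - Msᵀ) * JR a G z := by
    rw [hA, Matrix.transpose_mul, Matrix.transpose_sub, hSs, hinvT, hJdef]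
    rw [Matrix.mul_neg, Matrix.neg_mul, Matrix.mul_neg, Matrix.mul_assoc]
  -- derivative of J
  have hMdU : ∀ᶠ w in nhds z, MDiffAt (OmegaR a) w := by
    filter_upwards [hU.mem_nhds hz] with w hw
    exact omega_mdiffAt hU ha hw
  have hDΩi : matDirR (fun w => (OmegaR a w)⁻¹) z (ZhR a h z φ)
      = -((OmegaR a z)⁻¹ * matDirR (OmegaR a) z (ZhR a h z φ) * (OmegaR a z)⁻¹) :=
    mdd_inv hMdU (hΩ z hz) (ZhR a h z φ)
  have hGmd : MDiffAt G z := fun i j =>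
    ((hG i j).contDiffAt (hU.mem_nhds hz)).differentiableAt one_ne_zero
  have hDJ : matDirR (JR a G) z (ZhR a h z φ)
      = -(-((OmegaR a z)⁻¹ * matDirR (OmegaR a) z (ZhR a h z φ) * (OmegaR a z)⁻¹) * G z
          + (OmegaR a z)⁻¹ * matDirR G z (ZhR a h z φ)) := by
    have e : JR a G = fun w => -((fun w' => (OmegaR a w')⁻¹) w * G w) := rfl
    rw [matDirR_eq_mdd, e, mdd_neg, mdd_mul _ _ z (ZhR a h z φ)
      ((omega_mdiffAt hU ha hz).inv (hΩ z hz)) hGmd]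
    rw [← matDirR_eq_mdd, ← matDirR_eq_mdd, hDΩi]
  -- assemble
  show OmegaR a z * (DzZhR a h z φ - matDirR (JR a G) z (ZhR a h z φ) * (JR a G z)⁻¹
      - JR a G z * DzZhR a h z φ * (JR a G z)⁻¹) * JR a G z = _
  exact core_algebra (OmegaR a z) ((OmegaR a z)⁻¹) (G z) (JR a G z) ((JR a G z)⁻¹)
    (DzZhR a h z φ) S Ms (Msᵀ) (matDirR (OmegaR a) z (ZhR a h z φ))
    (matDirR G z (ZhR a h z φ)) (matDirR (JR a G) z (ZhR a h z φ))
    ((DzZhR a h z φ)ᵀ) hΩ1 hJ1 hJdef hΩA hR6 hDJ hAt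

end ZLevel4
end LieBAux
namespace LieBAux
section XLevel

variable {n ℓ m : ℕ} {U : Set (Fin m → ℝ)} {a : (Fin m → ℝ) → (Fin m → ℝ)}
  {h : (Fin m → ℝ) × (Fin ℓ → ℝ) → ℝ}

lemma mdd_transpose {p q : ℕ} {E : Type*} [NormedAddCommGroup E] [NormedSpace ℝ E]
    (M : E → Matrix (Fin p) (Fin q) ℝ) (x v : E) :
    mdd (fun w => (M w)ᵀ) x v = (mdd M x v)ᵀ := by
  ext i j; rfl

lemma lieR_eq {F : Type*} [NormedAddCommGroup F] [NormedSpace ℝ F]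
    (ω : Fin n → ℝ) (α : Fin ℓ → ℝ) (f : PtR n ℓ → F) (x : PtR n ℓ) :
    lieR ω α f x = -fderiv ℝ f x (ω, α) := by
  have hsingle : ∀ {k : ℕ} (c : Fin k → ℝ),
      ∑ i, c i • (Pi.single i 1 : Fin k → ℝ) = c := by
    intro k c
    have e : ∀ i, c i • (Pi.single i 1 : Fin k → ℝ) = Pi.single i (c i) := by
      intro i; rw [← Pi.single_smul, smul_eq_mul, mul_one]
    simp_rw [e, Finset.univ_sum_single]
  have h1 : ∑ i, ω i • fderiv ℝ f x (Pi.single i 1, 0)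
      = fderiv ℝ f x (ω, 0) := by
    have e : ∀ i : Fin n, ω i • fderiv ℝ f x (Pi.single i 1, 0)
        = fderiv ℝ f x (ω i • ((Pi.single i 1 : Fin n → ℝ), (0 : Fin ℓ → ℝ))) := by
      intro i; rw [_root_.map_smul]
    simp_rw [e, ← map_sum]
    congr 1
    rw [Prod.ext_iff]
    constructor
    · rw [Prod.fst_sum]
      simpa using hsingle ω
    · rw [Prod.snd_sum]
      simp
  have h2 : ∑ j, α j • fderiv ℝ f x (0, Pi.single j 1)
      = fderiv ℝ f x (0, α) := by
    have e : ∀ j : Fin ℓ, α j • fderiv ℝ f x (0, Pi.single j 1)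
        = fderiv ℝ f x (α j • ((0 : Fin n → ℝ), (Pi.single j 1 : Fin ℓ → ℝ))) := by
      intro j; rw [_root_.map_smul]
    simp_rw [e, ← map_sum]
    congr 1
    rw [Prod.ext_iff]
    constructor
    · rw [Prod.fst_sum]; simp
    · rw [Prod.snd_sum]; simpa using hsingle α
  rw [lieR, h1, h2, ← map_add]
  congr 2
  simp [Prod.ext_iff]

lemma lieRM_eq {p q : ℕ} (ω : Fin n → ℝ) (α : Fin ℓ → ℝ)
    (M : PtR n ℓ → Matrix (Fin p) (Fin q) ℝ) (x : PtR n ℓ) :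
    lieRM ω α M x = -(mdd M x (ω, α)) := by
  ext i j
  show lieR ω α (fun w => M w i j) x = -(fderiv ℝ (fun w => M w i j) x (ω, α))
  rw [lieR_eq]

section WithK
variable {K : PtR n ℓ → (Fin m → ℝ)}

/-- L entries are differentiable everywhere. -/
lemma L_mdiffAt (hK : ContDiff ℝ 2 K) (x : PtR n ℓ) :
    MDiffAt (fun w => DθR K w) x := by
  intro p i
  have h1 : ContDiff ℝ 1 (fderiv ℝ K) := hK.fderiv_right (le_refl 2)
  have h2 : DifferentiableAt ℝ (fun w => fderiv ℝ K w (Pi.single i 1, 0)) x :=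
    ((ContinuousLinearMap.apply ℝ (Fin m → ℝ)
      (((Pi.single i 1 : Fin n → ℝ), (0 : Fin ℓ → ℝ)))).differentiable.comp
        (h1.differentiable one_ne_zero)).differentiableAt
  have hF : HasFDerivAt (fun w => fderiv ℝ K w (Pi.single i 1, 0) p)
      ((ContinuousLinearMap.proj (R := ℝ) (φ := fun _ : Fin m => ℝ) p).comp
        (fderiv ℝ (fun w => fderiv ℝ K w (Pi.single i 1, 0)) x)) x :=
    HasFDerivAt.comp x (ContinuousLinearMap.hasFDerivAt
      (ContinuousLinearMap.proj (R := ℝ) (φ := fun _ : Fin m => ℝ) p)) h2.hasFDerivAt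
  exact hF.differentiableAt

/-- G∘K entries are differentiable everywhere. -/
lemma GK_mdiffAt (hU : IsOpen U) {G : (Fin m → ℝ) → Matrix (Fin m) (Fin m) ℝ}
    (hG : ∀ i j, ContDiffOn ℝ 1 (fun z => G z i j) U)
    (hK : ContDiff ℝ 2 K) (hKU : ∀ x, K x ∈ U) (x : PtR n ℓ) :
    MDiffAt (fun w => G (K w)) x := by
  intro i j
  have hGd : DifferentiableAt ℝ (fun z => G z i j) (K x) :=
    ((hG i j).contDiffAt (hU.mem_nhds (hKU x))).differentiableAt one_ne_zero
  exact hGd.comp x ((hK.differentiable two_ne_zero) x)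

end WithK
end XLevel
end LieBAux
namespace LieBAux
section XDeriv

variable {n ℓ m : ℕ} {U : Set (Fin m → ℝ)} {a : (Fin m → ℝ) → (Fin m → ℝ)}
  {h : (Fin m → ℝ) × (Fin ℓ → ℝ) → ℝ} {K : PtR n ℓ → (Fin m → ℝ)}

set_option maxHeartbeats 1000000 in
lemma mdd_L_eq (hU : IsOpen U) (ha : ContDiffOn ℝ 2 a U)
    (hΩ : ∀ z ∈ U, (OmegaR a z).det ≠ 0)
    (hh : ContDiffOn ℝ 2 h (U ×ˢ (Set.univ : Set (Fin ℓ → ℝ))))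
    (hK : ContDiff ℝ 2 K) (hKU : ∀ x, K x ∈ U)
    (ω : Fin n → ℝ) (α : Fin ℓ → ℝ)
    (hZK : ∀ w, fderiv ℝ K w (ω, α) = ZhR a h (K w) w.2)
    (x : PtR n ℓ) :
    mdd (fun w => DθR K w) x (ω, α) = DzZhR a h (K x) x.2 * DθR K x := by
  have hg : HasFDerivAt (fun w : PtR n ℓ => (K w, w.2))
      ((fderiv ℝ K x).prod (ContinuousLinearMap.snd ℝ (Fin n → ℝ) (Fin ℓ → ℝ))) x :=
    (((hK.differentiable two_ne_zero) x).hasFDerivAt).prodMk hasFDerivAt_snd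
  have hZc : ∀ p : Fin m, DifferentiableAt ℝ (fun w : PtR n ℓ => ZhR a h (K w) w.2 p) x := by
    intro p
    have e : (fun w : PtR n ℓ => ZhR a h (K w) w.2 p)
        = (fun pt : (Fin m → ℝ) × (Fin ℓ → ℝ) => ZhR a h pt.1 pt.2 p)
          ∘ (fun w : PtR n ℓ => (K w, w.2)) := rfl
    rw [e]
    exact (Zh_joint_diff hU ha hΩ hh (hKU x) x.2 p).comp x hg.differentiableAt
  have hZvec : DifferentiableAt ℝ (fun w : PtR n ℓ => ZhR a h (K w) w.2) x :=
    differentiableAt_pi.mpr hZc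
  have hdKu : ∀ u : PtR n ℓ, Differentiable ℝ (fun w => fderiv ℝ K w u) := fun u =>
    (ContinuousLinearMap.apply ℝ (Fin m → ℝ) u).differentiable.comp
      ((hK.fderiv_right (le_refl 2)).differentiable one_ne_zero)
  ext p i
  show fderiv ℝ (fun w => fderiv ℝ K w (Pi.single i 1, 0) p) x (ω, α) = _
  have hstep1 : fderiv ℝ (fun w => fderiv ℝ K w (Pi.single i 1, 0) p) x (ω, α)
      = fderiv ℝ (fun w => fderiv ℝ K w (Pi.single i 1, 0)) x (ω, α) p := by
    have hF : HasFDerivAt (fun w => fderiv ℝ K w (Pi.single i 1, 0) p)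
        ((ContinuousLinearMap.proj (R := ℝ) (φ := fun _ : Fin m => ℝ) p).comp
          (fderiv ℝ (fun w => fderiv ℝ K w (Pi.single i 1, 0)) x)) x :=
      HasFDerivAt.comp x (ContinuousLinearMap.hasFDerivAt
        (ContinuousLinearMap.proj (R := ℝ) (φ := fun _ : Fin m => ℝ) p))
        ((hdKu _ x).hasFDerivAt)
    rw [hF.fderiv]; rfl
  rw [hstep1, fderiv_swap (hK.contDiffAt) (Pi.single i 1, 0) (ω, α)]
  have e : (fun w => fderiv ℝ K w (ω, α)) = fun w => ZhR a h (K w) w.2 := funext hZK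
  rw [e]
  have hdown : fderiv ℝ (fun w : PtR n ℓ => ZhR a h (K w) w.2) x (Pi.single i 1, 0) p
      = fderiv ℝ (fun w : PtR n ℓ => ZhR a h (K w) w.2 p) x (Pi.single i 1, 0) := by
    have hF : HasFDerivAt (fun w : PtR n ℓ => ZhR a h (K w) w.2 p)
        ((ContinuousLinearMap.proj (R := ℝ) (φ := fun _ : Fin m => ℝ) p).comp
          (fderiv ℝ (fun w : PtR n ℓ => ZhR a h (K w) w.2) x)) x :=
      HasFDerivAt.comp x (ContinuousLinearMap.hasFDerivAt
        (ContinuousLinearMap.proj (R := ℝ) (φ := fun _ : Fin m => ℝ) p))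
        hZvec.hasFDerivAt
    rw [hF.fderiv]; rfl
  rw [hdown]
  have hchain : fderiv ℝ (fun w : PtR n ℓ => ZhR a h (K w) w.2 p) x (Pi.single i 1, 0)
      = fderiv ℝ (fun pt : (Fin m → ℝ) × (Fin ℓ → ℝ) => ZhR a h pt.1 pt.2 p) (K x, x.2)
          (fderiv ℝ K x (Pi.single i 1, 0), 0) := by
    have e2 : (fun w : PtR n ℓ => ZhR a h (K w) w.2 p)
        = (fun pt : (Fin m → ℝ) × (Fin ℓ → ℝ) => ZhR a h pt.1 pt.2 p)
          ∘ (fun w : PtR n ℓ => (K w, w.2)) := rfl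
    rw [e2, fderiv_comp x (Zh_joint_diff hU ha hΩ hh (hKU x) x.2 p) hg.differentiableAt,
      hg.fderiv]
    rfl
  rw [hchain,
    ← Zh_partial_eq_joint hU ha hΩ hh (hKU x) x.2 p (fderiv ℝ K x (Pi.single i 1, 0)),
    fderiv_apply_sum]
  show _ = (DzZhR a h (K x) x.2 * DθR K x) p i
  rw [Matrix.mul_apply]
  apply Finset.sum_congr rfl
  intro q _
  rw [mul_comm]
  rfl

lemma mdd_GK_eq (hU : IsOpen U) {G : (Fin m → ℝ) → Matrix (Fin m) (Fin m) ℝ}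
    (hG : ∀ i j, ContDiffOn ℝ 1 (fun z => G z i j) U)
    (hK : ContDiff ℝ 2 K) (hKU : ∀ x, K x ∈ U)
    {a : (Fin m → ℝ) → (Fin m → ℝ)} {h : (Fin m → ℝ) × (Fin ℓ → ℝ) → ℝ}
    (ω : Fin n → ℝ) (α : Fin ℓ → ℝ)
    (hZK : ∀ w, fderiv ℝ K w (ω, α) = ZhR a h (K w) w.2)
    (x : PtR n ℓ) :
    mdd (fun w => G (K w)) x (ω, α) = matDirR G (K x) (ZhR a h (K x) x.2) := by
  ext i j
  show fderiv ℝ (fun w => G (K w) i j) x (ω, α) = _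
  have hGd : DifferentiableAt ℝ (fun z => G z i j) (K x) :=
    ((hG i j).contDiffAt (hU.mem_nhds (hKU x))).differentiableAt one_ne_zero
  have hF : HasFDerivAt (fun w => G (K w) i j)
      ((fderiv ℝ (fun z => G z i j) (K x)).comp (fderiv ℝ K x)) x :=
    HasFDerivAt.comp x hGd.hasFDerivAt ((hK.differentiable two_ne_zero) x).hasFDerivAt
  rw [hF.fderiv]
  show fderiv ℝ (fun z => G z i j) (K x) (fderiv ℝ K x (ω, α)) = _
  rw [hZK x]
  rfl

end XDeriv
end LieBAux
/-- **Lie derivative of the transversality matrix on an invariant torus**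
(identity (eq:LieB) in the invariant case). If `Z_h(K(θ,φ),φ) = -ℒ_{ω,α}K(θ,φ)`,
then `B = (Lᵀ G(K) L)⁻¹` satisfies `ℒ_{ω,α}B = Ñᵀ J(K)^{-⊤} T_h(K,·) Ñ`,
where `Ñ = J(K) L B`. -/
theorem lie_derivative_transversality_invariant_torus
    (n ℓ : ℕ) (U : Set (Fin (2 * n) → ℝ)) (hU : IsOpen U)
    (a : (Fin (2 * n) → ℝ) → (Fin (2 * n) → ℝ)) (ha : ContDiffOn ℝ 2 a U)
    (hΩinv : ∀ z ∈ U, (OmegaR a z).det ≠ 0)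
    (G : (Fin (2 * n) → ℝ) → Matrix (Fin (2 * n)) (Fin (2 * n)) ℝ)
    (hG : ∀ i j, ContDiffOn ℝ 1 (fun z => G z i j) U)
    (hGsymm : ∀ z ∈ U, (G z)ᵀ = G z)
    (hGpos : ∀ z ∈ U, (G z).PosDef)
    (hJinv : ∀ z ∈ U, (JR a G z).det ≠ 0)
    (h : (Fin (2 * n) → ℝ) × (Fin ℓ → ℝ) → ℝ)
    (hh : ContDiffOn ℝ 2 h (U ×ˢ (Set.univ : Set (Fin ℓ → ℝ))))
    (hhper : ∀ (z : Fin (2 * n) → ℝ) (φ : Fin ℓ → ℝ) (m : Fin ℓ → ℤ),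
      h (z, φ + fun j => (m j : ℝ)) = h (z, φ))
    (K : PtR n ℓ → (Fin (2 * n) → ℝ)) (hKU : ∀ x, K x ∈ U)
    (hK : ContDiff ℝ 2 K) (hKper : PerR K)
    (hFrame : ∀ x : PtR n ℓ, ((DθR K x)ᵀ * G (K x) * DθR K x).det ≠ 0)
    (ω : Fin n → ℝ) (α : Fin ℓ → ℝ)
    (hinv : ∀ x : PtR n ℓ, ZhR a h (K x) x.2 = -lieR ω α K x) :
    let L : PtR n ℓ → Matrix (Fin (2 * n)) (Fin n) ℝ := fun x => DθR K x
    let B : PtR n ℓ → Matrix (Fin n) (Fin n) ℝ :=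
      fun x => ((L x)ᵀ * G (K x) * L x)⁻¹
    let Nt : PtR n ℓ → Matrix (Fin (2 * n)) (Fin n) ℝ :=
      fun x => JR a G (K x) * L x * B x
    ∀ x : PtR n ℓ,
      lieRM ω α B x
        = (Nt x)ᵀ * ((JR a G (K x))⁻¹)ᵀ * ThR a G h (K x) x.2 * Nt x := by
  intro L B Nt x
  show lieRM ω α (fun w => ((DθR K w)ᵀ * G (K w) * DθR K w)⁻¹) x
    = (JR a G (K x) * DθR K x * ((DθR K x)ᵀ * G (K x) * DθR K x)⁻¹)ᵀ
        * ((JR a G (K x))⁻¹)ᵀ * ThR a G h (K x) x.2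
        * (JR a G (K x) * DθR K x * ((DθR K x)ᵀ * G (K x) * DθR K x)⁻¹)
  have hKx : K x ∈ U := hKU x
  have hZK : ∀ w, fderiv ℝ K w (ω, α) = ZhR a h (K w) w.2 := by
    intro w
    have h1 := hinv w
    rw [LieBAux.lieR_eq] at h1
    rw [h1, neg_neg]
  -- differentiability packages
  have hLd : ∀ w, LieBAux.MDiffAt (fun w' => DθR K w') w := fun w => LieBAux.L_mdiffAt hK w
  have hGKd : ∀ w, LieBAux.MDiffAt (fun w' => G (K w')) w :=
    fun w => LieBAux.GK_mdiffAt hU hG hK hKU w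
  have hLtd : ∀ w, LieBAux.MDiffAt (fun w' => (DθR K w')ᵀ) w := fun w i j => hLd w j i
  have hQd : ∀ w, LieBAux.MDiffAt (fun w' => (DθR K w')ᵀ * G (K w')) w :=
    fun w => (hLtd w).mul (hGKd w)
  have hPd : ∀ w, LieBAux.MDiffAt (fun w' => (DθR K w')ᵀ * G (K w') * DθR K w') w :=
    fun w => (hQd w).mul (hLd w)
  -- Lie derivative of B
  rw [LieBAux.lieRM_eq]
  have hmddB : LieBAux.mdd (fun w => ((DθR K w)ᵀ * G (K w) * DθR K w)⁻¹) x (ω, α)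
      = -(((DθR K x)ᵀ * G (K x) * DθR K x)⁻¹
          * LieBAux.mdd (fun w => (DθR K w)ᵀ * G (K w) * DθR K w) x (ω, α)
          * ((DθR K x)ᵀ * G (K x) * DθR K x)⁻¹) :=
    LieBAux.mdd_inv (Filter.Eventually.of_forall hPd) (hFrame x) (ω, α)
  rw [hmddB, neg_neg]
  -- derivative of the product
  have hmddL : LieBAux.mdd (fun w => DθR K w) x (ω, α)
      = DzZhR a h (K x) x.2 * DθR K x :=
    LieBAux.mdd_L_eq hU ha hΩinv hh hK hKU ω α hZK x
  have hmddGK : LieBAux.mdd (fun w => G (K w)) x (ω, α)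
      = matDirR G (K x) (ZhR a h (K x) x.2) :=
    LieBAux.mdd_GK_eq hU hG hK hKU ω α hZK x
  have hmddQ : LieBAux.mdd (fun w => (DθR K w)ᵀ * G (K w)) x (ω, α)
      = (DzZhR a h (K x) x.2 * DθR K x)ᵀ * G (K x)
        + (DθR K x)ᵀ * matDirR G (K x) (ZhR a h (K x) x.2) := by
    rw [LieBAux.mdd_mul _ _ x (ω, α) (hLtd x) (hGKd x),
      LieBAux.mdd_transpose, hmddL, hmddGK]
  have hmddP : LieBAux.mdd (fun w => (DθR K w)ᵀ * G (K w) * DθR K w) x (ω, α)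
      = (DθR K x)ᵀ * ((DzZhR a h (K x) x.2)ᵀ * G (K x)
          + matDirR G (K x) (ZhR a h (K x) x.2)
          + G (K x) * DzZhR a h (K x) x.2) * DθR K x := by
    rw [LieBAux.mdd_mul _ _ x (ω, α) (hQd x) (hLd x), hmddQ, hmddL]
    simp only [Matrix.transpose_mul, Matrix.mul_add, Matrix.add_mul, Matrix.mul_assoc]
  rw [hmddP]
  -- core identity
  have hcore : (DzZhR a h (K x) x.2)ᵀ * G (K x)
        + matDirR G (K x) (ZhR a h (K x) x.2) + G (K x) * DzZhR a h (K x) x.2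
      = ThR a G h (K x) x.2 * JR a G (K x) :=
    (LieBAux.core_identity hU ha hΩinv G hG hGsymm hJinv hh hKx x.2).symm
  rw [hcore]
  -- right-hand side reduction
  have hiuJ : IsUnit (JR a G (K x)).det := isUnit_iff_ne_zero.mpr (hJinv (K x) hKx)
  have hJJ : (JR a G (K x))ᵀ * ((JR a G (K x))⁻¹)ᵀ = 1 := by
    rw [← Matrix.transpose_mul, Matrix.nonsing_inv_mul _ hiuJ, Matrix.transpose_one]
  have hBt : (((DθR K x)ᵀ * G (K x) * DθR K x)⁻¹)ᵀ
      = ((DθR K x)ᵀ * G (K x) * DθR K x)⁻¹ := by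
    rw [Matrix.transpose_nonsing_inv]
    congr 1
    rw [Matrix.transpose_mul, Matrix.transpose_mul, Matrix.transpose_transpose,
      hGsymm (K x) hKx, Matrix.mul_assoc]
  rw [Matrix.transpose_mul (JR a G (K x) * DθR K x)
    (((DθR K x)ᵀ * G (K x) * DθR K x)⁻¹),
    Matrix.transpose_mul (JR a G (K x)) (DθR K x), hBt]
  have hJJ' : ∀ (Y : Matrix (Fin (2*n)) (Fin n) ℝ),
      (JR a G (K x))ᵀ * (((JR a G (K x))⁻¹)ᵀ * Y) = Y := by
    intro Y
    rw [← Matrix.mul_assoc, hJJ, Matrix.one_mul]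
  simp only [Matrix.mul_assoc]
  rw [hJJ']

end
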